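/- arXiv:1506.04770 — 9 statements merged into one kernel-verified Lean document; each statement's English description precedes it below -/
import Mathlib

section
/- Let H be a Hilbert space and S a bounded subset of H. Then there exists a unique point v* in H such that S is contained in the closed ball centered at v* with radius equal to the Chebyshev radius rad(S) := inf { r : S ⊆ B(v,r) for some v ∈ H }. -/
/-!
By Apollonius' identity, if `S` lies in the balls `B(u, a)` and `B(v, b)`, then it lies in the
ball around the midpoint of `u` and `v` of radius `√((a² + b²)/2 - ‖u - v‖²/4)`. Since no ball
of radius below `rad(S)` contains `S`, this gives `‖u - v‖² ≤ 2a² + 2b² - 4 rad(S)²`.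
Taking `a = b = rad(S)` gives uniqueness of the center; taking radii decreasing to `rad(S)`
makes the corresponding centers a Cauchy sequence, whose limit is a center.
-/

/-- The Chebyshev radius of a set: the infimum of radii of closed balls containing it. -/
noncomputable def chebRadius {H : Type*} [NormedAddCommGroup H] (S : Set H) : ℝ :=
  sInf {r : ℝ | ∃ v : H, S ⊆ Metric.closedBall v r}

open Metric Filter Topology

section NormedGroup

variable {H : Type*} [NormedAddCommGroup H] {S : Set H}

lemma chebRadius_le_of_subset_closedBall (hS : S.Nonempty) {v : H} {r : ℝ}
    (h : S ⊆ closedBall v r) : chebRadius S ≤ r := by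
  obtain ⟨s, hs⟩ := hS
  refine csInf_le ⟨0, ?_⟩ ⟨v, h⟩
  rintro r' ⟨v', hv'⟩
  exact dist_nonneg.trans (hv' hs)

lemma chebRadius_nonneg (hS : S.Nonempty) : 0 ≤ chebRadius S := by
  obtain ⟨s, hs⟩ := hS
  refine Real.sInf_nonneg ?_
  rintro r ⟨v, hv⟩
  exact dist_nonneg.trans (hv hs)

lemma exists_subset_closedBall_of_chebRadius_lt (hS : Bornology.IsBounded S) {r : ℝ}
    (h : chebRadius S < r) : ∃ v, S ⊆ closedBall v r := by
  obtain ⟨r₀, hr₀⟩ := hS.subset_closedBall 0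
  have hne : {r : ℝ | ∃ v : H, S ⊆ closedBall v r}.Nonempty := ⟨r₀, 0, hr₀⟩
  obtain ⟨r', ⟨v, hv⟩, hr'⟩ := exists_lt_of_csInf_lt hne h
  exact ⟨v, hv.trans (closedBall_subset_closedBall hr'.le)⟩

end NormedGroup

section InnerProductSpace

variable {H : Type*} [NormedAddCommGroup H] [InnerProductSpace ℝ H] {S : Set H}

lemma dist_midpoint_sq_le {s u v : H} {a b : ℝ} (hu : dist s u ≤ a) (hv : dist s v ≤ b) :
    dist s (midpoint ℝ u v) ^ 2 ≤ (a ^ 2 + b ^ 2) / 2 - dist u v ^ 2 / 4 := by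
  have := EuclideanGeometry.dist_sq_add_dist_sq_eq_two_mul_dist_midpoint_sq_add_half_dist_sq s u v
  have hu' := pow_le_pow_left₀ dist_nonneg hu 2
  have hv' := pow_le_pow_left₀ dist_nonneg hv 2
  linarith

lemma subset_closedBall_midpoint {u v : H} {a b : ℝ} (hu : S ⊆ closedBall u a)
    (hv : S ⊆ closedBall v b) :
    S ⊆ closedBall (midpoint ℝ u v) √((a ^ 2 + b ^ 2) / 2 - dist u v ^ 2 / 4) := fun _ hs =>
  Real.le_sqrt_of_sq_le (dist_midpoint_sq_le (hu hs) (hv hs))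

lemma dist_sq_le_of_subset_closedBall (hS : S.Nonempty) {u v : H} {a b : ℝ}
    (hu : S ⊆ closedBall u a) (hv : S ⊆ closedBall v b) :
    dist u v ^ 2 ≤ 2 * (a ^ 2 + b ^ 2) - 4 * chebRadius S ^ 2 := by
  have hX : 0 ≤ (a ^ 2 + b ^ 2) / 2 - dist u v ^ 2 / 4 := by
    obtain ⟨s, hs⟩ := hS
    exact (sq_nonneg _).trans (dist_midpoint_sq_le (hu hs) (hv hs))
  have hR := chebRadius_le_of_subset_closedBall hS (subset_closedBall_midpoint hu hv)
  rw [Real.le_sqrt (chebRadius_nonneg hS) hX] at hR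
  linarith

lemma eq_of_subset_closedBall_chebRadius (hS : S.Nonempty) {u v : H}
    (hu : S ⊆ closedBall u (chebRadius S)) (hv : S ⊆ closedBall v (chebRadius S)) : u = v := by
  have := dist_sq_le_of_subset_closedBall hS hu hv
  exact dist_eq_zero.1 ((sq_nonpos_iff _).1 (by linarith))

lemma exists_subset_closedBall_chebRadius [CompleteSpace H] (hb : Bornology.IsBounded S)
    (hS : S.Nonempty) : ∃ v, S ⊆ closedBall v (chebRadius S) := by
  set R := chebRadius S
  obtain ⟨r, hr_anti, hRr, hr⟩ := exists_seq_strictAnti_tendsto R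
  choose w hw using fun n => exists_subset_closedBall_of_chebRadius_lt hb (hRr n)
  have hr0 : ∀ k, 0 ≤ r k := fun k => (chebRadius_nonneg hS).trans (hRr k).le
  have hdist : ∀ n m N, N ≤ n → N ≤ m → dist (w n) (w m) ≤ √(4 * (r N ^ 2 - R ^ 2)) := by
    intro n m N hn hm
    have hrn := pow_le_pow_left₀ (hr0 n) (hr_anti.antitone hn) 2
    have hrm := pow_le_pow_left₀ (hr0 m) (hr_anti.antitone hm) 2
    have := dist_sq_le_of_subset_closedBall hS (hw n) (hw m)
    exact Real.le_sqrt_of_sq_le (by linarith)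
  have hlim : Tendsto (fun N => √(4 * (r N ^ 2 - R ^ 2))) atTop (𝓝 0) := by
    have := (((hr.pow 2).sub_const (R ^ 2)).const_mul 4).sqrt
    rwa [sub_self, mul_zero, Real.sqrt_zero] at this
  obtain ⟨v, hv⟩ := cauchySeq_tendsto_of_complete (cauchySeq_of_le_tendsto_0 _ hdist hlim)
  exact ⟨v, fun s hs => le_of_tendsto_of_tendsto' (tendsto_const_nhds.dist hv) hr
    fun n => hw n hs⟩

end InnerProductSpace

/-- If `S` is a bounded (nonempty) subset of a Hilbert space `H`, there is a unique
point `v*` such that `S` is contained in the closed ball centered at `v*`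
of radius `rad(S)`. -/
theorem stmt0 {H : Type*} [NormedAddCommGroup H] [InnerProductSpace ℝ H] [CompleteSpace H]
    (S : Set H) (hbdd : Bornology.IsBounded S) (hne : S.Nonempty) :
    ∃! v : H, S ⊆ Metric.closedBall v (chebRadius S) := by
  obtain ⟨v, hv⟩ := exists_subset_closedBall_chebRadius hbdd hne
  exact ⟨v, hv, fun u hu => eq_of_subset_closedBall_chebRadius hne hu hv⟩
end

section
/- Let S be a nonempty bounded closed convex subset of a Hilbert space H. Then the Chebyshev center of S (the unique point u with S ⊆ B(u, rad(S))) belongs to S. -/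
/-- `R_S(v) = sup_{z ∈ S} ‖v - z‖`. -/
noncomputable def RS {H : Type*} [NormedAddCommGroup H] (S : Set H) (v : H) : ℝ :=
  sSup ((fun z => ‖v - z‖) '' S)

/-- The Chebyshev radius `rad(S) = inf_{v ∈ H} R_S(v)`. -/
noncomputable def chebRad {H : Type*} [NormedAddCommGroup H] (S : Set H) : ℝ :=
  sInf (Set.range (RS S))

set_option linter.unusedSectionVars false

section aux
variable {H : Type*} [NormedAddCommGroup H] [InnerProductSpace ℝ H]
variable {S : Set H}

lemma RS_bddAbove (hbdd : Bornology.IsBounded S) (v : H) :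
    BddAbove ((fun z => ‖v - z‖) '' S) := by
  obtain ⟨r, hr⟩ := hbdd.subset_closedBall v
  refine ⟨r, ?_⟩
  rintro x ⟨z, hz, rfl⟩
  have := hr hz
  simpa [Metric.mem_closedBall, dist_eq_norm, norm_sub_rev] using this

lemma le_RS (hbdd : Bornology.IsBounded S) {z : H} (hz : z ∈ S) (v : H) :
    ‖v - z‖ ≤ RS S v :=
  le_csSup (RS_bddAbove hbdd v) ⟨z, hz, rfl⟩

lemma RS_nonneg (hne : S.Nonempty) (hbdd : Bornology.IsBounded S) (v : H) :
    0 ≤ RS S v :=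
  le_trans (norm_nonneg _) (le_RS hbdd hne.choose_spec v)

lemma RS_le (hne : S.Nonempty) {v : H} {r : ℝ} (h : ∀ z ∈ S, ‖v - z‖ ≤ r) :
    RS S v ≤ r := by
  apply csSup_le (hne.image _)
  rintro x ⟨z, hz, rfl⟩
  exact h z hz

lemma chebRad_le (hne : S.Nonempty) (hbdd : Bornology.IsBounded S) (v : H) :
    chebRad S ≤ RS S v := by
  refine csInf_le ⟨0, ?_⟩ ⟨v, rfl⟩
  rintro _ ⟨w, rfl⟩
  exact RS_nonneg hne hbdd w

lemma chebRad_nonneg (hne : S.Nonempty) (hbdd : Bornology.IsBounded S) :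
    0 ≤ chebRad S := by
  apply Real.sInf_nonneg
  rintro _ ⟨w, rfl⟩
  exact RS_nonneg hne hbdd w

lemma key (hne : S.Nonempty) (hbdd : Bornology.IsBounded S) (u1 u2 : H) :
    ‖u1 - u2‖ ^ 2 ≤ 2 * (RS S u1) ^ 2 + 2 * (RS S u2) ^ 2 - 4 * (chebRad S) ^ 2 := by
  set m := (2 : ℝ)⁻¹ • (u1 + u2) with hm
  set c := (RS S u1) ^ 2 / 2 + (RS S u2) ^ 2 / 2 - ‖u1 - u2‖ ^ 2 / 4 with hc
  have hsq : ∀ z ∈ S, ‖m - z‖ ^ 2 = ‖u1 - z‖ ^ 2 / 2 + ‖u2 - z‖ ^ 2 / 2 - ‖u1 - u2‖ ^ 2 / 4 := by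
    intro z hz
    have hmz : m - z = (2 : ℝ)⁻¹ • ((u1 - z) + (u2 - z)) := by
      rw [hm]; module
    have par := parallelogram_law_with_norm ℝ (u1 - z) (u2 - z)
    have hsub : (u1 - z) - (u2 - z) = u1 - u2 := by abel
    rw [hsub] at par
    rw [hmz, norm_smul]
    have h2 : ‖(2 : ℝ)⁻¹‖ = (2 : ℝ)⁻¹ := by norm_num
    rw [h2]
    nlinarith [par]
  have hle : ∀ z ∈ S, ‖m - z‖ ^ 2 ≤ c := by
    intro z hz
    have h1 := le_RS hbdd hz u1
    have h2 := le_RS hbdd hz u2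
    have hn1 := norm_nonneg (u1 - z)
    have hn2 := norm_nonneg (u2 - z)
    rw [hsq z hz, hc]
    nlinarith
  have hc0 : 0 ≤ c := by
    obtain ⟨z, hz⟩ := hne
    exact le_trans (sq_nonneg ‖m - z‖) (hle z hz)
  have hRSm : RS S m ≤ Real.sqrt c := by
    apply RS_le hne
    intro z hz
    have := hle z hz
    calc ‖m - z‖ = Real.sqrt (‖m - z‖ ^ 2) := (Real.sqrt_sq (norm_nonneg _)).symm
      _ ≤ Real.sqrt c := Real.sqrt_le_sqrt this
  have hrad : chebRad S ≤ Real.sqrt c := le_trans (chebRad_le hne hbdd m) hRSm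
  have hrad2 : (chebRad S) ^ 2 ≤ c := by
    have h0 := chebRad_nonneg hne hbdd
    have := Real.sq_sqrt hc0
    nlinarith
  rw [hc] at hrad2
  linarith

lemma proj_lemma [CompleteSpace H] (hne : S.Nonempty) (hbdd : Bornology.IsBounded S)
    (hclosed : IsClosed S) (hconv : Convex ℝ S) (v : H) :
    ∃ p ∈ S, RS S p ≤ RS S v := by
  obtain ⟨p, hpS, hp⟩ := exists_norm_eq_iInf_of_complete_convex hne hclosed.isComplete hconv v
  have hinner := (norm_eq_iInf_iff_real_inner_le_zero hconv hpS).1 hp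
  refine ⟨p, hpS, RS_le hne ?_⟩
  intro z hz
  have h0 : @inner ℝ H _ (v - p) (z - p) ≤ 0 := hinner z hz
  have hdecomp : v - z = (v - p) + (p - z) := by abel
  have hexp := norm_add_sq_real (v - p) (p - z)
  rw [← hdecomp] at hexp
  have hinner2 : @inner ℝ H _ (v - p) (p - z) = -(@inner ℝ H _ (v - p) (z - p)) := by
    rw [← inner_neg_right]
    congr 1
    abel
  have hsq : ‖p - z‖ ^ 2 ≤ ‖v - z‖ ^ 2 := by nlinarith [sq_nonneg ‖v - p‖]
  have : ‖p - z‖ ≤ ‖v - z‖ := by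
    have h1 := norm_nonneg (p - z)
    have h2 := norm_nonneg (v - z)
    nlinarith
  exact le_trans this (le_RS hbdd hz v)

end aux

/-- For a nonempty bounded closed convex subset `S` of a Hilbert space, the Chebyshev
center of `S` (the unique point `u` with `S ⊆ B(u, rad(S))`) belongs to `S`. -/
theorem stmt4 {H : Type*} [NormedAddCommGroup H] [InnerProductSpace ℝ H] [CompleteSpace H]
    (S : Set H) (hne : S.Nonempty) (hbdd : Bornology.IsBounded S)
    (hclosed : IsClosed S) (hconv : Convex ℝ S) :
    ∃! u : H, S ⊆ Metric.closedBall u (chebRad S) ∧ u ∈ S := by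
  set r := chebRad S with hr
  have hr0 : 0 ≤ r := chebRad_nonneg hne hbdd
  -- uniqueness part
  have huniq : ∀ u1 u2 : H, S ⊆ Metric.closedBall u1 r → S ⊆ Metric.closedBall u2 r → u1 = u2 := by
    intro u1 u2 h1 h2
    have hRS1 : RS S u1 ≤ r := RS_le hne fun z hz => by
      have := h1 hz; rw [Metric.mem_closedBall, dist_eq_norm, norm_sub_rev] at this; exact this
    have hRS2 : RS S u2 ≤ r := RS_le hne fun z hz => by
      have := h2 hz; rw [Metric.mem_closedBall, dist_eq_norm, norm_sub_rev] at this; exact this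
    have hk := key hne hbdd u1 u2
    have hn1 := RS_nonneg hne hbdd u1
    have hn2 := RS_nonneg hne hbdd u2
    have : ‖u1 - u2‖ ^ 2 ≤ 0 := by nlinarith
    have hz : ‖u1 - u2‖ = 0 := by nlinarith [norm_nonneg (u1 - u2), sq_nonneg ‖u1 - u2‖]
    rwa [norm_sub_eq_zero_iff] at hz
  -- minimizing sequence
  have hstep : ∀ n : ℕ, ∃ u ∈ S, RS S u ≤ r + 1 / (n + 1) := by
    intro n
    have hpos : (0 : ℝ) < 1 / (n + 1) := by positivity
    have hlt : sInf (Set.range (RS S)) < r + 1 / (n + 1) := by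
      have he : chebRad S = sInf (Set.range (RS S)) := rfl
      rw [← he, ← hr]; linarith
    have hbb : BddBelow (Set.range (RS S)) := ⟨0, by rintro _ ⟨w, rfl⟩; exact RS_nonneg hne hbdd w⟩
    obtain ⟨x, ⟨v, rfl⟩, hx⟩ := (csInf_lt_iff hbb ⟨RS S hne.choose, ⟨hne.choose, rfl⟩⟩).1 hlt
    obtain ⟨p, hpS, hp⟩ := proj_lemma hne hbdd hclosed hconv v
    exact ⟨p, hpS, le_trans hp hx.le⟩
  choose u huS huRS using hstep
  -- Cauchy
  set b := fun N : ℕ => Real.sqrt (8 * r * (1 / (N + 1)) + 4 * (1 / (N + 1)) ^ 2) with hb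
  have hcauchy : CauchySeq u := by
    apply cauchySeq_of_le_tendsto_0 b
    · intro n m N hn hm
      have hk := key hne hbdd (u n) (u m)
      have heN : ∀ k : ℕ, N ≤ k → RS S (u k) ≤ r + 1 / (N + 1) := by
        intro k hk'
        refine le_trans (huRS k) ?_
        have : (1 : ℝ) / (k + 1) ≤ 1 / (N + 1) := by
          apply one_div_le_one_div_of_le
          · positivity
          · exact_mod_cast by omega
        linarith
      have h1 := heN n hn
      have h2 := heN m hm
      have hn1 := RS_nonneg hne hbdd (u n)
      have hn2 := RS_nonneg hne hbdd (u m)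
      have hd2 : dist (u n) (u m) ^ 2 ≤ 8 * r * (1 / (N + 1)) + 4 * (1 / (N + 1)) ^ 2 := by
        rw [dist_eq_norm]
        nlinarith
      rw [hb]
      calc dist (u n) (u m) = Real.sqrt (dist (u n) (u m) ^ 2) :=
            (Real.sqrt_sq dist_nonneg).symm
        _ ≤ _ := Real.sqrt_le_sqrt hd2
    · rw [hb]
      have h0 : Filter.Tendsto (fun N : ℕ => (1 : ℝ) / (N + 1)) Filter.atTop (nhds 0) :=
        tendsto_one_div_add_atTop_nhds_zero_nat
      have hf : Filter.Tendsto (fun N : ℕ => 8 * r * (1 / (N + 1 : ℝ)) + 4 * (1 / (N + 1 : ℝ)) ^ 2)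
          Filter.atTop (nhds 0) := by
        have := ((h0.const_mul (8 * r)).add ((h0.pow 2).const_mul 4))
        simpa using this
      have := hf.sqrt
      simpa using this
  obtain ⟨x, hx⟩ := cauchySeq_tendsto_of_complete hcauchy
  have hxS : x ∈ S := hclosed.mem_of_tendsto hx (Filter.Eventually.of_forall huS)
  have hxball : ∀ z ∈ S, ‖x - z‖ ≤ r := by
    intro z hz
    have hlim1 : Filter.Tendsto (fun n => ‖u n - z‖) Filter.atTop (nhds ‖x - z‖) :=
      ((hx.sub_const z).norm)
    have hlim2 : Filter.Tendsto (fun n : ℕ => r + 1 / (n + 1 : ℝ)) Filter.atTop (nhds r) := by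
      have h0 : Filter.Tendsto (fun N : ℕ => (1 : ℝ) / (N + 1)) Filter.atTop (nhds 0) :=
        tendsto_one_div_add_atTop_nhds_zero_nat
      simpa using (tendsto_const_nhds.add h0)
    refine le_of_tendsto_of_tendsto' hlim1 hlim2 fun n => ?_
    exact le_trans (le_RS hbdd hz (u n)) (huRS n)
  refine ⟨x, ⟨fun z hz => ?_, hxS⟩, fun y hy => huniq y x hy.1 fun z hz => ?_⟩
  · rw [Metric.mem_closedBall, dist_eq_norm, norm_sub_rev]
    exact hxball z hz
  · rw [Metric.mem_closedBall, dist_eq_norm, norm_sub_rev]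
    exact hxball z hz
end

section
/- Let S be a bounded closed convex subset of a Hilbert space H with 0 ∉ S, and let s₀ be the unique element of S of minimal norm. Then sup_{s ∈ S} ‖s - s₀‖² ≤ sup_{s ∈ S} ‖s‖² - ‖s₀‖². In particular 0 is not the Chebyshev center of S. -/
open scoped RealInnerProductSpace

lemma sq_sup_eq {H : Type*} [NormedAddCommGroup H] {S : Set H} (hne : S.Nonempty)
    {C : ℝ} (hC : ∀ x ∈ S, ‖x‖ ≤ C) (v : H) :
    sSup ((fun s => ‖v - s‖ ^ 2) '' S) = (RS S v) ^ 2 := by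
  have hbdd1 : BddAbove ((fun z => ‖v - z‖) '' S) := by
    refine ⟨‖v‖ + C, ?_⟩
    rintro _ ⟨z, hz, rfl⟩
    calc ‖v - z‖ ≤ ‖v‖ + ‖z‖ := norm_sub_le _ _
    _ ≤ ‖v‖ + C := by linarith [hC z hz]
  have hbdd2 : BddAbove ((fun s => ‖v - s‖ ^ 2) '' S) := by
    refine ⟨(‖v‖ + C) ^ 2, ?_⟩
    rintro _ ⟨z, hz, rfl⟩
    have h1 : ‖v - z‖ ≤ ‖v‖ + C := by
      calc ‖v - z‖ ≤ ‖v‖ + ‖z‖ := norm_sub_le _ _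
      _ ≤ ‖v‖ + C := by linarith [hC z hz]
    exact pow_le_pow_left₀ (norm_nonneg _) h1 2
  have hRSnn : 0 ≤ RS S v := by
    obtain ⟨s, hs⟩ := hne
    exact le_trans (norm_nonneg _) (le_csSup hbdd1 ⟨s, hs, rfl⟩)
  apply le_antisymm
  · apply csSup_le (hne.image _)
    rintro _ ⟨z, hz, rfl⟩
    exact pow_le_pow_left₀ (norm_nonneg _) (le_csSup hbdd1 ⟨z, hz, rfl⟩) 2
  · have hsqnn : 0 ≤ sSup ((fun s => ‖v - s‖ ^ 2) '' S) := by
      obtain ⟨s, hs⟩ := hne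
      exact le_trans (sq_nonneg _) (le_csSup hbdd2 ⟨s, hs, rfl⟩)
    have : RS S v ≤ Real.sqrt (sSup ((fun s => ‖v - s‖ ^ 2) '' S)) := by
      apply csSup_le (hne.image _)
      rintro _ ⟨z, hz, rfl⟩
      have h := Real.sqrt_le_sqrt (le_csSup hbdd2 ⟨z, hz, rfl⟩)
      rwa [Real.sqrt_sq (norm_nonneg _)] at h
    calc (RS S v) ^ 2 ≤ Real.sqrt (sSup ((fun s => ‖v - s‖ ^ 2) '' S)) ^ 2 :=
          pow_le_pow_left₀ hRSnn this 2
      _ = _ := Real.sq_sqrt hsqnn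

/-- If `S` is a nonempty bounded closed convex set with `0 ∉ S` and `s₀` is its element of
minimal norm, then `sup_{s∈S} ‖s - s₀‖² ≤ sup_{s∈S} ‖s‖² - ‖s₀‖²`; in particular `0` is not
the Chebyshev center of `S` (its sup-distance to `S` exceeds the Chebyshev radius). -/
theorem stmt5 {H : Type*} [NormedAddCommGroup H] [InnerProductSpace ℝ H] [CompleteSpace H]
    (S : Set H) (hne : S.Nonempty) (hbdd : Bornology.IsBounded S)
    (hclosed : IsClosed S) (hconv : Convex ℝ S) (h0 : (0 : H) ∉ S)
    (s₀ : H) (hs₀S : s₀ ∈ S) (hs₀min : ∀ s ∈ S, ‖s₀‖ ≤ ‖s‖) :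
    sSup ((fun s => ‖s - s₀‖ ^ 2) '' S) ≤ sSup ((fun s => ‖s‖ ^ 2) '' S) - ‖s₀‖ ^ 2 ∧
      chebRad S < RS S 0 := by
  obtain ⟨C, hC⟩ := isBounded_iff_forall_norm_le.mp hbdd
  -- variational inequality
  have hvar : ∀ s ∈ S, ‖s₀‖ ^ 2 ≤ ⟪s, s₀⟫ := by
    have hinf : ‖(0 : H) - s₀‖ = ⨅ w : S, ‖(0 : H) - w‖ := by
      haveI : Nonempty S := ⟨⟨s₀, hs₀S⟩⟩
      apply le_antisymm
      · apply le_ciInf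
        rintro ⟨w, hw⟩
        simpa using hs₀min w hw
      · have hb : BddBelow (Set.range fun w : S => ‖(0 : H) - (w : H)‖) :=
          ⟨0, by rintro _ ⟨w, rfl⟩; exact norm_nonneg _⟩
        exact ciInf_le hb ⟨s₀, hs₀S⟩
    have := (norm_eq_iInf_iff_real_inner_le_zero hconv hs₀S).mp hinf
    intro s hs
    have h2 := this s hs
    have heq : ⟪(0 : H) - s₀, s - s₀⟫ = -⟪s, s₀⟫ + ‖s₀‖ ^ 2 := by
      rw [zero_sub, inner_neg_left, inner_sub_right, real_inner_comm s₀ s,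
        real_inner_self_eq_norm_sq]
      ring
    rw [heq] at h2
    linarith
  have hbddsq : BddAbove ((fun s : H => ‖s‖ ^ 2) '' S) := by
    refine ⟨C ^ 2, ?_⟩
    rintro _ ⟨z, hz, rfl⟩
    exact pow_le_pow_left₀ (norm_nonneg _) (hC z hz) 2
  have part1 : sSup ((fun s => ‖s - s₀‖ ^ 2) '' S) ≤ sSup ((fun s => ‖s‖ ^ 2) '' S) - ‖s₀‖ ^ 2 := by
    apply csSup_le (hne.image _)
    rintro _ ⟨s, hs, rfl⟩
    show ‖s - s₀‖ ^ 2 ≤ _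
    have h1 : ‖s - s₀‖ ^ 2 = ‖s‖ ^ 2 - 2 * ⟪s, s₀⟫ + ‖s₀‖ ^ 2 := norm_sub_sq_real s s₀
    have h2 : ‖s‖ ^ 2 ≤ sSup ((fun s : H => ‖s‖ ^ 2) '' S) := le_csSup hbddsq ⟨s, hs, rfl⟩
    have h3 := hvar s hs
    linarith
  refine ⟨part1, ?_⟩
  -- second part
  have hsq0 : sSup ((fun s => ‖(0:H) - s‖ ^ 2) '' S) = (RS S 0) ^ 2 := sq_sup_eq hne hC 0
  have hsqs₀ : sSup ((fun s => ‖s₀ - s‖ ^ 2) '' S) = (RS S s₀) ^ 2 := sq_sup_eq hne hC s₀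
  have he0 : ∀ s : H, ‖(0:H) - s‖ ^ 2 = ‖s‖ ^ 2 := by intro s; rw [zero_sub, norm_neg]
  have he1 : ∀ s : H, ‖s₀ - s‖ ^ 2 = ‖s - s₀‖ ^ 2 := by intro s; rw [norm_sub_rev]
  have hs₀pos : 0 < ‖s₀‖ := by
    rcases eq_or_ne s₀ 0 with h | h
    · exact absurd (h ▸ hs₀S) h0
    · exact norm_pos_iff.mpr h
  have hlt : (RS S s₀) ^ 2 < (RS S 0) ^ 2 := by
    rw [← hsq0, ← hsqs₀]
    simp only [he0, he1]
    have : 0 < ‖s₀‖ ^ 2 := pow_pos hs₀pos 2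
    linarith
  have hRSnn : ∀ v : H, 0 ≤ RS S v := by
    intro v
    obtain ⟨s, hs⟩ := hne
    have hb : BddAbove ((fun z => ‖v - z‖) '' S) := by
      refine ⟨‖v‖ + C, ?_⟩
      rintro _ ⟨z, hz, rfl⟩
      calc ‖v - z‖ ≤ ‖v‖ + ‖z‖ := norm_sub_le _ _
      _ ≤ ‖v‖ + C := by linarith [hC z hz]
    exact le_trans (norm_nonneg _) (le_csSup hb ⟨s, hs, rfl⟩)
  have hRSlt : RS S s₀ < RS S 0 := by
    by_contra h
    push_neg at h
    exact absurd (pow_le_pow_left₀ (hRSnn 0) h 2) (not_le.mpr hlt)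
  calc chebRad S ≤ RS S s₀ := csInf_le ⟨0, by rintro _ ⟨v, rfl⟩; exact hRSnn v⟩ ⟨s₀, rfl⟩
    _ < RS S 0 := hRSlt
end

section
/- Let V and W be closed subspaces of a Hilbert space H and define β(V,W) := inf_{v ∈ V, v≠0} ‖P_W v‖/‖v‖ and μ(V,W) := sup_{η ∈ W^⊥, η≠0} ‖η‖/‖P_{V^⊥} η‖. Then μ(V,W) = β(V,W)^{-1} (with the convention that both sides are +∞ when β(V,W)=0). -/
open scoped ENNReal

open Submodule

/-!
Write `projRatioSup K L` for the supremum of `‖x‖ / ‖P_L x‖` over nonzero `x ∈ K`; then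
`μ(V,W) = projRatioSup Wᗮ Vᗮ` and `β(V,W)⁻¹ = projRatioSup V W`.

For `η ∈ Lᗮ` put `v = P_K η`. Since `η = P_{Lᗮ} η` and projections are self-adjoint,
`‖v‖² = ⟪v, η⟫ = ⟪P_{Lᗮ} v, η⟫ ≤ ‖P_{Lᗮ} v‖ ‖η‖`, and with Pythagoras for `P_K` and `P_L` this
becomes `‖η‖ ‖P_L v‖ ≤ ‖v‖ ‖P_{Kᗮ} η‖`. Hence `projRatioSup Lᗮ Kᗮ ≤ projRatioSup K L`. Applied to
`(V, W)` and to `(Wᗮ, Vᗮ)`, using `Vᗮᗮ = V` and `Wᗮᗮ = W`, this gives both inequalities.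
-/

lemma ENNReal.coe_div_le_coe_div_of_mul_le {a b c d : NNReal} (hc : c ≠ 0) (h : a * d ≤ c * b) :
    (a : ℝ≥0∞) / b ≤ c / d := by
  rcases eq_or_ne d 0 with rfl | hd
  · simp [ENNReal.div_zero (ENNReal.coe_ne_zero.mpr hc)]
  rcases eq_or_ne b 0 with rfl | hb
  · have ha : a = 0 := by simpa [hd] using h
    simp [ha]
  rw [← ENNReal.coe_div hb, ← ENNReal.coe_div hd, ENNReal.coe_le_coe,
    div_le_div_iff₀ (pos_iff_ne_zero.mpr hb) (pos_iff_ne_zero.mpr hd)]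
  exact h

section

variable {H : Type*} [NormedAddCommGroup H] [InnerProductSpace ℝ H]

noncomputable def projRatioSup (K L : Submodule ℝ H) [L.HasOrthogonalProjection] : ℝ≥0∞ :=
  ⨆ x : {x : H // x ∈ K ∧ x ≠ 0}, (‖(x : H)‖₊ : ℝ≥0∞) / ‖L.starProjection x‖₊

lemma projRatioSup_congr {K K' L L' : Submodule ℝ H} [L.HasOrthogonalProjection]
    [L'.HasOrthogonalProjection] (hK : K = K') (hL : L = L') :
    projRatioSup K L = projRatioSup K' L' := by
  subst hK hL
  rfl

lemma le_projRatioSup {K L : Submodule ℝ H} [L.HasOrthogonalProjection] {x : H} (hxK : x ∈ K)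
    (hx : x ≠ 0) : (‖x‖₊ : ℝ≥0∞) / ‖L.starProjection x‖₊ ≤ projRatioSup K L :=
  le_iSup_of_le (⟨x, hxK, hx⟩ : {x : H // x ∈ K ∧ x ≠ 0}) le_rfl

lemma norm_mul_norm_starProjection_starProjection_le {K L : Submodule ℝ H}
    [K.HasOrthogonalProjection] [L.HasOrthogonalProjection] {η : H} (hη : η ∈ Lᗮ) :
    ‖η‖ * ‖L.starProjection (K.starProjection η)‖ ≤
      ‖K.starProjection η‖ * ‖Kᗮ.starProjection η‖ := by
  set v := K.starProjection η
  have hv_inner : ‖v‖ ^ 2 = inner ℝ v η := by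
    simpa using (K.re_inner_starProjection_eq_normSq η).symm
  have hv_le : ‖v‖ ^ 2 ≤ ‖Lᗮ.starProjection v‖ * ‖η‖ := by
    calc ‖v‖ ^ 2 = inner ℝ v (Lᗮ.starProjection η) := by
          rw [hv_inner, starProjection_eq_self_iff.mpr hη]
      _ = inner ℝ (Lᗮ.starProjection v) η := (Lᗮ.inner_starProjection_left_eq_right v η).symm
      _ ≤ ‖Lᗮ.starProjection v‖ * ‖η‖ := real_inner_le_norm _ _
  have hv_pyth := L.norm_sq_eq_add_norm_sq_starProjection v
  have hη_pyth := K.norm_sq_eq_add_norm_sq_starProjection η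
  have hv_sq := mul_le_mul hv_le hv_le (sq_nonneg _) (by positivity)
  rw [← sq_le_sq₀ (by positivity) (by positivity)]
  nlinarith [congrArg (· * ‖η‖ ^ 2) hv_pyth, congrArg (· * ‖L.starProjection v‖ ^ 2) hη_pyth]

lemma projRatioSup_orthogonal_le {K L : Submodule ℝ H} [K.HasOrthogonalProjection]
    [L.HasOrthogonalProjection] (hK : K ≠ ⊥) : projRatioSup Lᗮ Kᗮ ≤ projRatioSup K L := by
  refine iSup_le fun ⟨η, hηL, hη⟩ => ?_
  by_cases hv : K.starProjection η = 0
  · -- then `η ∈ Kᗮ`, so its ratio is `1`, which any nonzero `x ∈ K` beats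
    obtain ⟨x, hxK, hx⟩ := (Submodule.ne_bot_iff K).mp hK
    rw [starProjection_eq_self_iff.mpr (K.starProjection_apply_eq_zero_iff.mp hv)]
    refine le_trans ?_ (le_projRatioSup hxK hx)
    refine ENNReal.coe_div_le_coe_div_of_mul_le (nnnorm_ne_zero_iff.mpr hx) ?_
    rw [← NNReal.coe_le_coe]
    push_cast
    rw [mul_comm]
    gcongr
    exact L.norm_starProjection_apply_le x
  · refine le_trans ?_ (le_projRatioSup (K.starProjection_apply_mem η) hv)
    refine ENNReal.coe_div_le_coe_div_of_mul_le (nnnorm_ne_zero_iff.mpr hv) ?_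
    rw [← NNReal.coe_le_coe]
    push_cast
    exact norm_mul_norm_starProjection_starProjection_le hηL

end

theorem stmt6_general {H : Type*} [NormedAddCommGroup H] [InnerProductSpace ℝ H] [CompleteSpace H]
    (V W : Submodule ℝ H) (hVc : IsClosed (V : Set H))
    [Submodule.HasOrthogonalProjection W] [Submodule.HasOrthogonalProjection Vᗮ]
    (hV : V ≠ ⊥) (hWperp : Wᗮ ≠ ⊥) :
    (⨆ η : {x : H // x ∈ Wᗮ ∧ x ≠ 0},
        (‖(η : H)‖₊ : ℝ≥0∞) / (‖(Submodule.orthogonalProjectionOnto Vᗮ (η : H) : H)‖₊ : ℝ≥0∞)) =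
      (⨅ v : {x : H // x ∈ V ∧ x ≠ 0},
        (‖(Submodule.orthogonalProjectionOnto W (v : H) : H)‖₊ : ℝ≥0∞) / (‖(v : H)‖₊ : ℝ≥0∞))⁻¹ := by
  have : CompleteSpace V := hVc.completeSpace_coe
  have hβ_inv : (⨅ v : {x : H // x ∈ V ∧ x ≠ 0},
      (‖(orthogonalProjectionOnto W (v : H) : H)‖₊ : ℝ≥0∞) / ‖(v : H)‖₊)⁻¹ = projRatioSup V W := by
    rw [ENNReal.inv_iInf]
    refine iSup_congr fun v => ?_
    exact ENNReal.inv_div (Or.inl ENNReal.coe_ne_top) (Or.inl (by simpa using v.2.2))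
  change projRatioSup Wᗮ Vᗮ = _
  rw [hβ_inv]
  refine le_antisymm (projRatioSup_orthogonal_le hV) ?_
  calc projRatioSup V W = projRatioSup Vᗮᗮ Wᗮᗮ :=
        projRatioSup_congr V.orthogonal_orthogonal.symm W.orthogonal_orthogonal.symm
    _ ≤ projRatioSup Wᗮ Vᗮ := projRatioSup_orthogonal_le hWperp

/-- For closed subspaces `V, W` of a Hilbert space (with `V ≠ {0}` and `W^⊥ ≠ {0}`),
`μ(V,W) = sup_{0≠η∈W^⊥} ‖η‖/‖P_{V^⊥}η‖` equals `β(V,W)⁻¹` where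
`β(V,W) = inf_{0≠v∈V} ‖P_W v‖/‖v‖`, the quantities computed in `ℝ≥0∞` so that both sides
are `+∞` when `β(V,W) = 0`. -/
theorem stmt6 {H : Type*} [NormedAddCommGroup H] [InnerProductSpace ℝ H] [CompleteSpace H]
    (V W : Submodule ℝ H) (hVc : IsClosed (V : Set H)) (hWc : IsClosed (W : Set H))
    [Submodule.HasOrthogonalProjection W] [Submodule.HasOrthogonalProjection Vᗮ]
    (hV : V ≠ ⊥) (hWperp : Wᗮ ≠ ⊥) :
    (⨆ η : {x : H // x ∈ Wᗮ ∧ x ≠ 0},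
        (‖(η : H)‖₊ : ℝ≥0∞) / (‖(Submodule.orthogonalProjectionOnto Vᗮ (η : H) : H)‖₊ : ℝ≥0∞)) =
      (⨅ v : {x : H // x ∈ V ∧ x ≠ 0},
        (‖(Submodule.orthogonalProjectionOnto W (v : H) : H)‖₊ : ℝ≥0∞) / (‖(v : H)‖₊ : ℝ≥0∞))⁻¹ :=
  stmt6_general V W hVc hV hWperp
end

section
/- Let V be a finite-dimensional subspace and W a closed subspace of a Hilbert space H with β(V,W) := inf_{v∈V,v≠0} ‖P_W v‖/‖v‖ > 0. Then for every w ∈ W there exists a unique u* in the affine space H_w := { u ∈ H : P_W u = w } minimizing ‖u - P_V u‖ over H_w. -/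
/-!
Minimizing `‖u - P_V u‖` over `u ∈ H_w` is minimizing `‖u - v‖` over `u ∈ H_w`, `v ∈ V`.
For fixed `v` the nearest point of `H_w` is `w + (v - P_W v)`, at distance `‖w - P_W v‖`, so the
minimum is the distance from `w` to the finite-dimensional subspace `P_W V`, attained exactly when
`P_W v` is the projection of `w` onto it. As `β(V,W) > 0` makes `P_W` injective on `V`, this pins
down `v`, and with it the minimizer `w + (v - P_W v)`.
-/

open Submodule

namespace Submodule

variable {𝕜 E : Type*} [RCLike 𝕜] [NormedAddCommGroup E] [InnerProductSpace 𝕜 E]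

section Nearest

variable (U : Submodule 𝕜 E) [U.HasOrthogonalProjection] (y : E) {x : E}

theorem norm_sub_sq_eq_norm_sub_starProjection_sq_add (hx : x ∈ U) :
    ‖y - x‖ ^ 2 = ‖y - U.starProjection y‖ ^ 2 + ‖U.starProjection y - x‖ ^ 2 := by
  simpa only [sq, sub_add_sub_cancel] using norm_add_sq_eq_norm_sq_add_norm_sq_of_inner_eq_zero _ _
    (U.starProjection_inner_eq_zero y _ (sub_mem (U.starProjection_apply_mem y) hx))

theorem norm_sub_starProjection_le (hx : x ∈ U) : ‖y - U.starProjection y‖ ≤ ‖y - x‖ := by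
  rw [← sq_le_sq₀ (norm_nonneg _) (norm_nonneg _),
    U.norm_sub_sq_eq_norm_sub_starProjection_sq_add y hx]
  exact le_add_of_nonneg_right (sq_nonneg _)

theorem eq_starProjection_of_norm_sub_le (hx : x ∈ U) (h : ‖y - x‖ ≤ ‖y - U.starProjection y‖) :
    x = U.starProjection y := by
  rw [← sq_le_sq₀ (norm_nonneg _) (norm_nonneg _),
    U.norm_sub_sq_eq_norm_sub_starProjection_sq_add y hx, add_le_iff_nonpos_right, sq_nonpos_iff,
    norm_eq_zero, sub_eq_zero] at h
  exact h.symm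

end Nearest

section AffineFibre

variable {W : Submodule 𝕜 E} [W.HasOrthogonalProjection] {w : E}

theorem starProjection_add_sub_starProjection (hw : w ∈ W) (x : E) :
    W.starProjection (w + (x - W.starProjection x)) = w := by
  simp [starProjection_eq_self_iff.2 hw,
    starProjection_eq_self_iff.2 (W.starProjection_apply_mem x)]

theorem norm_sub_starProjection_le_of_starProjection_eq {u : E} (hu : W.starProjection u = w)
    (x : E) : ‖w - W.starProjection x‖ ≤ ‖u - x‖ := by
  rw [← hu, ← map_sub]
  exact W.norm_starProjection_apply_le _

theorem eq_add_sub_starProjection_of_norm_le {u x : E} (hu : W.starProjection u = w)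
    (h : ‖u - x‖ ≤ ‖w - W.starProjection x‖) : u = w + (x - W.starProjection x) := by
  have hPux : W.starProjection (u - x) = w - W.starProjection x := by rw [map_sub, hu]
  have hmem : u - x ∈ W := by
    rw [mem_iff_norm_starProjection, hPux]
    exact le_antisymm (hPux ▸ W.norm_starProjection_apply_le _) h
  rw [starProjection_eq_self_iff.2 hmem] at hPux
  rw [← sub_add_cancel u x, hPux]
  abel

end AffineFibre

theorem injOn_starProjection_of_mul_norm_le {V W : Submodule 𝕜 E} [W.HasOrthogonalProjection]
    {β : ℝ} (hβ : 0 < β) (h : ∀ v ∈ V, β * ‖v‖ ≤ ‖W.starProjection v‖) :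
    Set.InjOn W.starProjection V := by
  intro v hv v' hv' hvv'
  have := h (v - v') (sub_mem hv hv')
  rw [map_sub, hvv', sub_self, norm_zero] at this
  rw [← sub_eq_zero, ← norm_le_zero_iff]
  exact nonpos_of_mul_nonpos_right this hβ

end Submodule

theorem stmt7_general {H : Type*} [NormedAddCommGroup H] [InnerProductSpace ℝ H]
    (V W : Submodule ℝ H) [FiniteDimensional ℝ V] [Submodule.HasOrthogonalProjection W]
    (hβ : ∃ β > (0 : ℝ), ∀ v ∈ V, β * ‖v‖ ≤ ‖(Submodule.orthogonalProjectionOnto W v : H)‖)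
    (w : H) (hw : w ∈ W) :
    ∃! u : H, (Submodule.orthogonalProjectionOnto W u : H) = w ∧
      ∀ u' : H, (Submodule.orthogonalProjectionOnto W u' : H) = w →
        ‖u - (Submodule.orthogonalProjectionOnto V u : H)‖ ≤ ‖u' - (Submodule.orthogonalProjectionOnto V u' : H)‖ := by
  obtain ⟨β, hβpos, hβV⟩ := hβ
  simp only [coe_orthogonalProjectionOnto_apply] at hβV ⊢
  set P := W.starProjection
  set Q := V.starProjection
  set T := V.map P.toLinearMap
  obtain ⟨v₀, hv₀, hPv₀⟩ : ∃ v₀ ∈ V, P v₀ = T.starProjection w := T.starProjection_apply_mem w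
  have hQT (u : H) : P (Q u) ∈ T := mem_map_of_mem (V.starProjection_apply_mem u)
  have hlow (u : H) (hu : P u = w) :
      ‖w - T.starProjection w‖ ≤ ‖w - P (Q u)‖ ∧ ‖w - P (Q u)‖ ≤ ‖u - Q u‖ :=
    ⟨T.norm_sub_starProjection_le w (hQT u), norm_sub_starProjection_le_of_starProjection_eq hu _⟩
  set u₀ := w + (v₀ - P v₀)
  have hPu₀ : P u₀ = w := starProjection_add_sub_starProjection hw v₀
  have hu₀ : ‖u₀ - Q u₀‖ ≤ ‖w - T.starProjection w‖ := calc
    _ ≤ ‖u₀ - v₀‖ := V.norm_sub_starProjection_le _ hv₀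
    _ = ‖w - T.starProjection w‖ := by rw [← hPv₀, add_sub_right_comm, sub_add_sub_cancel]
  refine ⟨u₀, ⟨hPu₀, fun u hu => hu₀.trans ((hlow u hu).1.trans (hlow u hu).2)⟩, ?_⟩
  rintro u ⟨hu, hmin⟩
  obtain ⟨h₁, h₂⟩ := hlow u hu
  have hle : ‖u - Q u‖ ≤ ‖w - T.starProjection w‖ := (hmin u₀ hPu₀).trans hu₀
  have hQu : Q u = v₀ := injOn_starProjection_of_mul_norm_le hβpos hβV
    (V.starProjection_apply_mem u) hv₀
    (hPv₀ ▸ T.eq_starProjection_of_norm_sub_le w (hQT u) (h₂.trans hle))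
  rw [eq_add_sub_starProjection_of_norm_le hu (hle.trans h₁), hQu]

/-- If `V` is finite-dimensional, `W` closed with `β(V,W) > 0`, then for every `w ∈ W`
there is a unique `u*` in the affine space `H_w = {u : P_W u = w}` minimizing
`‖u - P_V u‖` over `H_w`. -/
theorem stmt7 {H : Type*} [NormedAddCommGroup H] [InnerProductSpace ℝ H] [CompleteSpace H]
    (V W : Submodule ℝ H) [FiniteDimensional ℝ V] [Submodule.HasOrthogonalProjection W]
    (hβ : ∃ β > (0 : ℝ), ∀ v ∈ V, β * ‖v‖ ≤ ‖(Submodule.orthogonalProjectionOnto W v : H)‖)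
    (w : H) (hw : w ∈ W) :
    ∃! u : H, (Submodule.orthogonalProjectionOnto W u : H) = w ∧
      ∀ u' : H, (Submodule.orthogonalProjectionOnto W u' : H) = w →
        ‖u - (Submodule.orthogonalProjectionOnto V u : H)‖ ≤ ‖u' - (Submodule.orthogonalProjectionOnto V u' : H)‖ :=
  stmt7_general V W hβ w hw
end

section
/- Let V be a finite-dimensional subspace and W a closed subspace of a Hilbert space H with β(V,W) > 0, let w ∈ W, and let (u*, v*) ∈ H_w × V be the unique minimizing pair of ‖u - v‖ over u ∈ H_w and v ∈ V. Then u* - v* is orthogonal to both V and W^⊥. -/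
open scoped RealInnerProductSpace

/-! Moving `v*` inside `V`, or moving `u*` by an element of `Wᗮ` (which leaves `P_W u*`
unchanged), keeps the pair admissible. Hence `u* - v*` is a point of least norm in its cosets
modulo `V` and modulo `Wᗮ`, and least norm in a coset of a subspace characterises orthogonality
to that subspace. -/

theorem Submodule.mem_orthogonal_of_forall_norm_le_norm_sub {H : Type*} [NormedAddCommGroup H]
    [InnerProductSpace ℝ H] (K : Submodule ℝ H) {x : H} (h : ∀ k ∈ K, ‖x‖ ≤ ‖x - k‖) :
    x ∈ Kᗮ := by
  have hinf : ‖x - 0‖ = ⨅ k : K, ‖x - k‖ :=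
    le_antisymm (le_ciInf fun k ↦ by simpa using h k k.2)
      (ciInf_le ⟨0, by rintro _ ⟨k, rfl⟩; positivity⟩ (0 : K))
  exact (K.mem_orthogonal' x).2 <| by
    simpa using (norm_eq_iInf_iff_real_inner_eq_zero K K.zero_mem).1 hinf

theorem stmt8_general {H : Type*} [NormedAddCommGroup H] [InnerProductSpace ℝ H]
    (V W : Submodule ℝ H) [W.HasOrthogonalProjection]
    (w : H) (ustar vstar : H)
    (hu : (W.orthogonalProjectionOnto ustar : H) = w) (hv : vstar ∈ V)
    (hmin : ∀ u v : H, (W.orthogonalProjectionOnto u : H) = w → v ∈ V →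
      ‖ustar - vstar‖ ≤ ‖u - v‖) :
    (∀ v ∈ V, ⟪ustar - vstar, v⟫ = 0) ∧ (∀ η ∈ Wᗮ, ⟪ustar - vstar, η⟫ = 0) := by
  have hV : ustar - vstar ∈ Vᗮ := V.mem_orthogonal_of_forall_norm_le_norm_sub fun v hvV ↦ by
    simpa [sub_sub] using hmin ustar (vstar + v) hu (V.add_mem hv hvV)
  have hW : ustar - vstar ∈ Wᗮᗮ := Wᗮ.mem_orthogonal_of_forall_norm_le_norm_sub fun η hη ↦ by
    have hproj : (W.orthogonalProjectionOnto (ustar - η) : H) = w := by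
      rw [map_sub, W.orthogonalProjectionOnto_apply_of_mem_orthogonal hη, sub_zero, hu]
    simpa [sub_right_comm] using hmin (ustar - η) vstar hproj hv
  exact ⟨(V.mem_orthogonal' _).1 hV, (Wᗮ.mem_orthogonal' _).1 hW⟩

/-- If `(u*, v*) ∈ H_w × V` is the minimizing pair of `‖u - v‖` over `H_w × V`
(where `H_w = {u : P_W u = w}` and `β(V,W) > 0`), then `u* - v*` is orthogonal
to both `V` and `W^⊥`. -/
theorem stmt8 {H : Type*} [NormedAddCommGroup H] [InnerProductSpace ℝ H] [CompleteSpace H]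
    (V W : Submodule ℝ H) [FiniteDimensional ℝ V] [W.HasOrthogonalProjection]
    (hβ : ∃ β > (0 : ℝ), ∀ v ∈ V, β * ‖v‖ ≤ ‖(W.orthogonalProjectionOnto v : H)‖)
    (w : H) (hw : w ∈ W) (ustar vstar : H)
    (hu : (W.orthogonalProjectionOnto ustar : H) = w) (hv : vstar ∈ V)
    (hmin : ∀ u v : H, (W.orthogonalProjectionOnto u : H) = w → v ∈ V →
      ‖ustar - vstar‖ ≤ ‖u - v‖) :
    (∀ v ∈ V, ⟪ustar - vstar, v⟫ = 0) ∧ (∀ η ∈ Wᗮ, ⟪ustar - vstar, η⟫ = 0) :=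
  stmt8_general V W w ustar vstar hu hv hmin
end

section
/- Let V be a finite-dimensional subspace and W a closed subspace of H with β(V,W) > 0, and let w ∈ W. If u ∈ H_w and v ∈ V are such that u - v is orthogonal to both V and W^⊥, then (u,v) is the unique minimizing pair of ‖u' - v'‖ over u' ∈ H_w, v' ∈ V. -/
open scoped RealInnerProductSpace

/-!
For `u'` with `P_W u' = w` and `v' ∈ V`, write `u' - v' = (u - v) + z` with
`z = (u' - u) + (v - v') ∈ Wᗮ + V`. The orthogonality hypotheses make `z ⟂ u - v`, so
`‖u' - v'‖² = ‖u - v‖² + ‖z‖²` by Pythagoras. Equality forces `z = 0`, i.e.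
`u' - u = v' - v ∈ V ⊓ Wᗮ`, and the inf-sup condition `β(V, W) > 0` makes this
intersection trivial.
-/

section

variable {H : Type*} [NormedAddCommGroup H] [InnerProductSpace ℝ H]

theorem norm_le_norm_add_of_inner_eq_zero {x y : H} (h : ⟪x, y⟫ = 0) :
    ‖x‖ ≤ ‖x + y‖ := by
  have hsq : ‖x‖ ^ 2 ≤ ‖x + y‖ ^ 2 := by
    rw [norm_add_sq_real, h, mul_zero, add_zero]
    exact le_add_of_nonneg_right (sq_nonneg _)
  exact (pow_le_pow_iff_left₀ (norm_nonneg _) (norm_nonneg _) two_ne_zero).mp hsq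

theorem eq_zero_of_norm_add_eq_of_inner_eq_zero {x y : H} (h : ⟪x, y⟫ = 0)
    (hnorm : ‖x + y‖ = ‖x‖) : y = 0 := by
  have hsq := norm_add_sq_real x y
  rw [hnorm, h, mul_zero, add_zero] at hsq
  exact norm_eq_zero.mp (pow_eq_zero_iff two_ne_zero |>.mp (by linarith))

namespace Submodule

theorem sub_mem_orthogonal_of_orthogonalProjectionOnto_eq (K : Submodule ℝ H)
    [K.HasOrthogonalProjection] {x y : H}
    (h : (K.orthogonalProjectionOnto x : H) = K.orthogonalProjectionOnto y) : x - y ∈ Kᗮ := by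
  rw [← orthogonalProjectionOnto_eq_zero_iff, map_sub, sub_eq_zero]
  exact Subtype.ext h

theorem eq_zero_of_mem_orthogonal_of_forall_mul_norm_le {V W : Submodule ℝ H}
    [W.HasOrthogonalProjection] {β : ℝ} (hβ : 0 < β)
    (hVW : ∀ v ∈ V, β * ‖v‖ ≤ ‖(W.orthogonalProjectionOnto v : H)‖)
    {x : H} (hxV : x ∈ V) (hxW : x ∈ Wᗮ) : x = 0 := by
  have hle := hVW x hxV
  rw [orthogonalProjectionOnto_eq_zero_iff.mpr hxW, ZeroMemClass.coe_zero, norm_zero] at hle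
  exact norm_le_zero_iff.mp (nonpos_of_mul_nonpos_right hle hβ)

end Submodule

end

theorem stmt9_general {H : Type*} [NormedAddCommGroup H] [InnerProductSpace ℝ H]
    (V W : Submodule ℝ H) [Submodule.HasOrthogonalProjection W]
    (hβ : ∃ β > (0 : ℝ), ∀ v' ∈ V, β * ‖v'‖ ≤ ‖(W.orthogonalProjectionOnto v' : H)‖)
    (w : H) (u v : H)
    (hu : (W.orthogonalProjectionOnto u : H) = w) (hv : v ∈ V)
    (horthV : ∀ x ∈ V, ⟪u - v, x⟫ = 0) (horthW : ∀ η ∈ Wᗮ, ⟪u - v, η⟫ = 0) :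
    (∀ u' v' : H, (W.orthogonalProjectionOnto u' : H) = w → v' ∈ V →
        ‖u - v‖ ≤ ‖u' - v'‖) ∧
      (∀ u' v' : H, (W.orthogonalProjectionOnto u' : H) = w → v' ∈ V →
        ‖u' - v'‖ = ‖u - v‖ → u' = u ∧ v' = v) := by
  obtain ⟨β, hβ0, hVW⟩ := hβ
  have hperp : ∀ u' v' : H, (W.orthogonalProjectionOnto u' : H) = w → v' ∈ V →
      u' - u ∈ Wᗮ ∧ ⟪u - v, (u' - u) + (v - v')⟫ = 0 := by
    intro u' v' hu' hv'
    have hWperp := W.sub_mem_orthogonal_of_orthogonalProjectionOnto_eq (hu'.trans hu.symm)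
    refine ⟨hWperp, ?_⟩
    rw [inner_add_right, horthW _ hWperp, horthV _ (V.sub_mem hv hv'), add_zero]
  have hdecomp (u' v' : H) : u' - v' = (u - v) + ((u' - u) + (v - v')) := by abel
  refine ⟨fun u' v' hu' hv' => ?_, fun u' v' hu' hv' heq => ?_⟩
  · rw [hdecomp u' v']
    exact norm_le_norm_add_of_inner_eq_zero (hperp u' v' hu' hv').2
  · obtain ⟨hWperp, hinner⟩ := hperp u' v' hu' hv'
    rw [hdecomp u' v'] at heq
    have hshift : u' - u = v' - v := by
      rw [← neg_sub v v', ← add_eq_zero_iff_eq_neg]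
      exact eq_zero_of_norm_add_eq_of_inner_eq_zero hinner heq
    have hv'v : v' = v := sub_eq_zero.mp <|
      Submodule.eq_zero_of_mem_orthogonal_of_forall_mul_norm_le hβ0 hVW (V.sub_mem hv' hv)
        (hshift ▸ hWperp)
    exact ⟨sub_eq_zero.mp (hshift.trans (sub_eq_zero.mpr hv'v)), hv'v⟩

/-- Conversely, if `u ∈ H_w` and `v ∈ V` are such that `u - v` is orthogonal to both
`V` and `W^⊥`, then `(u, v)` is the unique minimizing pair of `‖u' - v'‖` over
`H_w × V` (assuming `β(V,W) > 0`). -/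
theorem stmt9 {H : Type*} [NormedAddCommGroup H] [InnerProductSpace ℝ H] [CompleteSpace H]
    (V W : Submodule ℝ H) [FiniteDimensional ℝ V] [Submodule.HasOrthogonalProjection W]
    (hβ : ∃ β > (0 : ℝ), ∀ v' ∈ V, β * ‖v'‖ ≤ ‖(W.orthogonalProjectionOnto v' : H)‖)
    (w : H) (hw : w ∈ W) (u v : H)
    (hu : (W.orthogonalProjectionOnto u : H) = w) (hv : v ∈ V)
    (horthV : ∀ x ∈ V, ⟪u - v, x⟫ = 0) (horthW : ∀ η ∈ Wᗮ, ⟪u - v, η⟫ = 0) :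
    (∀ u' v' : H, (W.orthogonalProjectionOnto u' : H) = w → v' ∈ V →
        ‖u - v‖ ≤ ‖u' - v'‖) ∧
      (∀ u' v' : H, (W.orthogonalProjectionOnto u' : H) = w → v' ∈ V →
        ‖u' - v'‖ = ‖u - v‖ → u' = u ∧ v' = v) :=
  stmt9_general V W hβ w u v hu hv horthV horthW
end

section
/- For any u ∈ H with w = P_W u, the element u*(w) - v*(w) equals P_{V_n^⊥ ∩ W} u, the orthogonal projection of u onto V_n^⊥ ∩ W; consequently P_{V_n} u + (u*(w) - v*(w)) = P_{V_n ⊕ (V_n^⊥ ∩ W)} u. -/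
/-!
Write `d = u* - v*`. Minimality in `v'` alone says `d` is a best approximation of itself by
`V_n` at `0`, so `d ⊥ V_n`; moving `u*` by the `W^⊥`-component of `d` keeps `P_W u*` fixed and
turns `d` into `P_W d`, so minimality forces `‖d‖ ≤ ‖P_W d‖`, i.e. `d ∈ W`. Since
`u - d = (u - u*) + v*` with `u - u* ∈ W^⊥` and `v* ∈ V_n`, it is orthogonal to `V_n^⊥ ∩ W`,
which identifies `d` as the projection of `u` there. The second claim is additivity of orthogonal
projections onto mutually orthogonal subspaces.
-/

namespace Submodule

variable {𝕜 E : Type*} [RCLike 𝕜] [NormedAddCommGroup E] [InnerProductSpace 𝕜 E]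

theorem mem_of_norm_le_norm_starProjection (K : Submodule 𝕜 E) [K.HasOrthogonalProjection]
    {x : E} (h : ‖x‖ ≤ ‖K.starProjection x‖) : x ∈ K :=
  (K.mem_iff_norm_starProjection x).2 (le_antisymm (K.norm_starProjection_apply_le x) h)

theorem mem_orthogonal_of_forall_norm_le_norm_sub_s13 (K : Submodule 𝕜 E) [K.HasOrthogonalProjection]
    {x : E} (h : ∀ w ∈ K, ‖x‖ ≤ ‖x - w‖) : x ∈ Kᗮ :=
  Kᗮ.mem_of_norm_le_norm_starProjection <| by
    rw [starProjection_orthogonal_val]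
    exact h _ (K.starProjection_apply_mem x)

theorem sub_mem_orthogonal_of_starProjection_eq {K : Submodule 𝕜 E} [K.HasOrthogonalProjection]
    {x y : E} (h : K.starProjection x = K.starProjection y) : x - y ∈ Kᗮ :=
  K.starProjection_apply_eq_zero_iff.1 (by rw [map_sub, h, sub_self])

theorem starProjection_add_starProjection_eq_sup {K L : Submodule 𝕜 E}
    [K.HasOrthogonalProjection] [L.HasOrthogonalProjection] [(K ⊔ L).HasOrthogonalProjection]
    (hLK : L ≤ Kᗮ) (x : E) :
    K.starProjection x + L.starProjection x = (K ⊔ L).starProjection x := by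
  have hKL : K ≤ Lᗮ := K.le_orthogonal_orthogonal.trans (orthogonal_le hLK)
  refine (eq_starProjection_of_mem_orthogonal
    (add_mem (mem_sup_left (K.starProjection_apply_mem x))
      (mem_sup_right (L.starProjection_apply_mem x))) ?_).symm
  rw [← inf_orthogonal]
  constructor
  · rw [sub_add_eq_sub_sub]
    exact sub_mem (K.sub_starProjection_mem_orthogonal x) (hLK (L.starProjection_apply_mem x))
  · rw [sub_add_eq_sub_sub_swap]
    exact sub_mem (L.sub_starProjection_mem_orthogonal x) (hKL (K.starProjection_apply_mem x))

end Submodule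

section MinimizingPair

open Submodule

variable {𝕜 E : Type*} [RCLike 𝕜] [NormedAddCommGroup E] [InnerProductSpace 𝕜 E]

structure IsMinimizingPair (V W : Submodule 𝕜 E) [W.HasOrthogonalProjection] (u ustar vstar : E) :
    Prop where
  starProjection_eq : W.starProjection ustar = W.starProjection u
  mem : vstar ∈ V
  norm_le : ∀ u' v' : E, W.starProjection u' = W.starProjection u → v' ∈ V →
    ‖ustar - vstar‖ ≤ ‖u' - v'‖

namespace IsMinimizingPair

variable {V W : Submodule 𝕜 E} [W.HasOrthogonalProjection] {u ustar vstar : E}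

theorem sub_mem_orthogonal [V.HasOrthogonalProjection] (h : IsMinimizingPair V W u ustar vstar) :
    ustar - vstar ∈ Vᗮ :=
  V.mem_orthogonal_of_forall_norm_le_norm_sub_s13 fun w hw => by
    simpa only [sub_add_eq_sub_sub] using
      h.norm_le ustar (vstar + w) h.starProjection_eq (add_mem h.mem hw)

theorem sub_mem (h : IsMinimizingPair V W u ustar vstar) : ustar - vstar ∈ W := by
  set d := ustar - vstar
  have hshift : W.starProjection (ustar - Wᗮ.starProjection d) = W.starProjection u := by
    rw [map_sub, W.starProjection_apply_eq_zero_iff.2 (Wᗮ.starProjection_apply_mem d), sub_zero,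
      h.starProjection_eq]
  have hdiff : ustar - Wᗮ.starProjection d - vstar = W.starProjection d := by
    rw [starProjection_orthogonal_val]
    simp only [d]
    abel
  refine W.mem_of_norm_le_norm_starProjection ?_
  simpa only [hdiff] using h.norm_le _ vstar hshift h.mem

theorem starProjection_inf_orthogonal_eq [V.HasOrthogonalProjection]
    [(Vᗮ ⊓ W).HasOrthogonalProjection] (h : IsMinimizingPair V W u ustar vstar) :
    (Vᗮ ⊓ W).starProjection u = ustar - vstar := by
  refine eq_starProjection_of_mem_orthogonal ⟨h.sub_mem_orthogonal, h.sub_mem⟩ ?_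
  rw [sub_sub_eq_add_sub, add_comm, add_sub_assoc]
  refine add_mem ?_ ?_
  · exact orthogonal_le inf_le_left (V.le_orthogonal_orthogonal h.mem)
  · exact orthogonal_le inf_le_right
      (sub_mem_orthogonal_of_starProjection_eq h.starProjection_eq.symm)

end IsMinimizingPair

end MinimizingPair

theorem stmt13_general {H : Type*} [NormedAddCommGroup H] [InnerProductSpace ℝ H]
    (Vn W : Submodule ℝ H) [FiniteDimensional ℝ Vn] [Submodule.HasOrthogonalProjection W]
    [Submodule.HasOrthogonalProjection (Vnᗮ ⊓ W : Submodule ℝ H)]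
    [Submodule.HasOrthogonalProjection (Vn ⊔ (Vnᗮ ⊓ W) : Submodule ℝ H)]
    (u ustar vstar : H)
    (hu : (Submodule.orthogonalProjectionOnto W ustar : H) = (Submodule.orthogonalProjectionOnto W u : H))
    (hv : vstar ∈ Vn)
    (hmin : ∀ u' v' : H,
      (Submodule.orthogonalProjectionOnto W u' : H) = (Submodule.orthogonalProjectionOnto W u : H) → v' ∈ Vn →
        ‖ustar - vstar‖ ≤ ‖u' - v'‖) :
    ustar - vstar = (Submodule.orthogonalProjectionOnto (Vnᗮ ⊓ W : Submodule ℝ H) u : H) ∧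
      (Submodule.orthogonalProjectionOnto Vn u : H) + (ustar - vstar) =
        (Submodule.orthogonalProjectionOnto (Vn ⊔ (Vnᗮ ⊓ W) : Submodule ℝ H) u : H) := by
  have hpair : IsMinimizingPair Vn W u ustar vstar := ⟨hu, hv, hmin⟩
  have hproj : ustar - vstar = (Vnᗮ ⊓ W).starProjection u :=
    hpair.starProjection_inf_orthogonal_eq.symm
  refine ⟨hproj, ?_⟩
  rw [hproj]
  exact Submodule.starProjection_add_starProjection_eq_sup inf_le_left u

/-- For any `u ∈ H` with `w = P_W u`, the element `u*(w) - v*(w)` equals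
`P_{V_n^⊥ ∩ W} u`; consequently `P_{V_n} u + (u*(w) - v*(w)) = P_{V_n ⊕ (V_n^⊥ ∩ W)} u`. -/
theorem stmt13 {H : Type*} [NormedAddCommGroup H] [InnerProductSpace ℝ H] [CompleteSpace H]
    (Vn W : Submodule ℝ H) [FiniteDimensional ℝ Vn] [Submodule.HasOrthogonalProjection W]
    [Submodule.HasOrthogonalProjection (Vnᗮ ⊓ W : Submodule ℝ H)]
    [Submodule.HasOrthogonalProjection (Vn ⊔ (Vnᗮ ⊓ W) : Submodule ℝ H)]
    (hβ : ∃ β > (0 : ℝ), ∀ v ∈ Vn, β * ‖v‖ ≤ ‖(Submodule.orthogonalProjectionOnto W v : H)‖)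
    (u ustar vstar : H)
    (hu : (Submodule.orthogonalProjectionOnto W ustar : H) = (Submodule.orthogonalProjectionOnto W u : H))
    (hv : vstar ∈ Vn)
    (hmin : ∀ u' v' : H,
      (Submodule.orthogonalProjectionOnto W u' : H) = (Submodule.orthogonalProjectionOnto W u : H) → v' ∈ Vn →
        ‖ustar - vstar‖ ≤ ‖u' - v'‖) :
    ustar - vstar = (Submodule.orthogonalProjectionOnto (Vnᗮ ⊓ W : Submodule ℝ H) u : H) ∧
      (Submodule.orthogonalProjectionOnto Vn u : H) + (ustar - vstar) =
        (Submodule.orthogonalProjectionOnto (Vn ⊔ (Vnᗮ ⊓ W) : Submodule ℝ H) u : H) :=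
  stmt13_general Vn W u ustar vstar hu hv hmin
end

section
/- Let K := ∩_{j=0}^n { u ∈ H : dist(u,V_j) ≤ ε_j } with ε_j > 0. If u₁, u₂ ∈ K, then the closed ball centered at u₀ := (u₁+u₂)/2 with radius r := (1/8)·min_{0≤j≤n} ε_j^{-1}·‖P_{V_j^⊥}(u₁) - P_{V_j^⊥}(u₂)‖² is entirely contained in K. -/
/-!
By the parallelogram law, the midpoint of two points of the ball of radius `ε` in an inner
product space lies at depth at least `‖x - y‖² / (8ε)` inside that ball. Orthogonal projections
are linear and `1`-Lipschitz, so the same holds for the sets `{u | ‖P u‖ ≤ ε}`, and intersecting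
over `j` gives the claim.
-/

open Metric

theorem norm_midpoint_add_le_of_norm_le {F : Type*} [NormedAddCommGroup F]
    [InnerProductSpace ℝ F] {x y : F} {ε : ℝ} (hε : 0 < ε) (hx : ‖x‖ ≤ ε) (hy : ‖y‖ ≤ ε) :
    ‖(1 / 2 : ℝ) • (x + y)‖ + (1 / 8) * (ε⁻¹ * ‖x - y‖ ^ 2) ≤ ε := by
  have hmid : ‖(1 / 2 : ℝ) • (x + y)‖ = ‖x + y‖ / 2 := by
    rw [norm_smul]; norm_num; ring
  have hpar : ‖x + y‖ ^ 2 + ‖x - y‖ ^ 2 ≤ 4 * ε ^ 2 := by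
    rw [parallelogram_law_with_norm ℝ x y]
    nlinarith [mul_self_le_mul_self (norm_nonneg x) hx, mul_self_le_mul_self (norm_nonneg y) hy]
  -- `4ε‖x + y‖ ≤ 4ε² + ‖x + y‖²` by AM-GM
  have hkey : 0 ≤ 8 * ε ^ 2 - 4 * ε * ‖x + y‖ - ‖x - y‖ ^ 2 := by
    nlinarith [sq_nonneg (‖x + y‖ - 2 * ε)]
  have hgap : ε - (‖x + y‖ / 2 + 1 / 8 * (ε⁻¹ * ‖x - y‖ ^ 2)) =
      (8 * ε ^ 2 - 4 * ε * ‖x + y‖ - ‖x - y‖ ^ 2) / (8 * ε) := by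
    field_simp
    ring
  rw [hmid, ← sub_nonneg, hgap]
  positivity

theorem closedBall_midpoint_subset_preimage_closedBall {E F : Type*} [SeminormedAddCommGroup E]
    [NormedSpace ℝ E] [NormedAddCommGroup F] [InnerProductSpace ℝ F] (L : E →L[ℝ] F)
    (hL : ‖L‖ ≤ 1) {ε : ℝ} (hε : 0 < ε) {u₁ u₂ : E} (h₁ : ‖L u₁‖ ≤ ε) (h₂ : ‖L u₂‖ ≤ ε) :
    closedBall ((1 / 2 : ℝ) • (u₁ + u₂)) ((1 / 8) * (ε⁻¹ * ‖L u₁ - L u₂‖ ^ 2)) ⊆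
      L ⁻¹' closedBall 0 ε := by
  intro u hu
  rw [Set.mem_preimage, mem_closedBall_zero_iff]
  set u₀ : E := (1 / 2 : ℝ) • (u₁ + u₂)
  have hLu₀ : L u₀ = (1 / 2 : ℝ) • (L u₁ + L u₂) := by rw [map_smul, map_add]
  have hdist : ‖L u - L u₀‖ ≤ dist u u₀ := by
    rw [← map_sub, dist_eq_norm]
    exact L.le_of_opNorm_le hL _ |>.trans_eq (one_mul _)
  calc ‖L u‖ ≤ ‖L u₀‖ + ‖L u - L u₀‖ := norm_le_insert' _ _
    _ ≤ ‖L u₀‖ + (1 / 8) * (ε⁻¹ * ‖L u₁ - L u₂‖ ^ 2) := by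
        gcongr
        exact hdist.trans (mem_closedBall.mp hu)
    _ ≤ ε := hLu₀ ▸ norm_midpoint_add_le_of_norm_le hε h₁ h₂

theorem stmt18_general {H : Type*} [NormedAddCommGroup H] [InnerProductSpace ℝ H] [CompleteSpace H]
    (n : ℕ) (V : Fin (n + 1) → Submodule ℝ H)
    (ε : Fin (n + 1) → ℝ) (hε : ∀ j, 0 < ε j)
    (u₁ u₂ : H)
    (h₁ : ∀ j, ‖(Submodule.orthogonalProjectionOnto (V j)ᗮ u₁ : H)‖ ≤ ε j)
    (h₂ : ∀ j, ‖(Submodule.orthogonalProjectionOnto (V j)ᗮ u₂ : H)‖ ≤ ε j) :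
    Metric.closedBall ((1 / 2 : ℝ) • (u₁ + u₂))
        ((1 / 8) * ⨅ j : Fin (n + 1),
          (ε j)⁻¹ * ‖(Submodule.orthogonalProjectionOnto (V j)ᗮ u₁ : H) -
            (Submodule.orthogonalProjectionOnto (V j)ᗮ u₂ : H)‖ ^ 2) ⊆
      {u : H | ∀ j, ‖(Submodule.orthogonalProjectionOnto (V j)ᗮ u : H)‖ ≤ ε j} := by
  intro u hu j
  set P := fun j ↦ (V j)ᗮ.starProjection
  have hr : (1 / 8) * ⨅ i, (ε i)⁻¹ * ‖P i u₁ - P i u₂‖ ^ 2 ≤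
      (1 / 8) * ((ε j)⁻¹ * ‖P j u₁ - P j u₂‖ ^ 2) := by
    gcongr
    exact ciInf_le (Finite.bddBelow_range _) j
  simpa using closedBall_midpoint_subset_preimage_closedBall (P j)
    (V j)ᗮ.starProjection_norm_le (hε j) (h₁ j) (h₂ j) (closedBall_subset_closedBall hr hu)

/-- If `u₁, u₂ ∈ K := ∩_j {u : ‖P_{V_j^⊥}u‖ ≤ ε_j}`, then the closed ball centered at
`u₀ = (u₁ + u₂)/2` of radius
`r = (1/8)·min_j ε_j⁻¹·‖P_{V_j^⊥}u₁ - P_{V_j^⊥}u₂‖²` is contained in `K`. -/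
theorem stmt18 {H : Type*} [NormedAddCommGroup H] [InnerProductSpace ℝ H] [CompleteSpace H]
    (n : ℕ) (V : Fin (n + 1) → Submodule ℝ H) [∀ j, FiniteDimensional ℝ (V j)]
    (hmono : ∀ i j : Fin (n + 1), i ≤ j → V i ≤ V j)
    (ε : Fin (n + 1) → ℝ) (hε : ∀ j, 0 < ε j)
    (u₁ u₂ : H)
    (h₁ : ∀ j, ‖(Submodule.orthogonalProjectionOnto (V j)ᗮ u₁ : H)‖ ≤ ε j)
    (h₂ : ∀ j, ‖(Submodule.orthogonalProjectionOnto (V j)ᗮ u₂ : H)‖ ≤ ε j) :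
    Metric.closedBall ((1 / 2 : ℝ) • (u₁ + u₂))
        ((1 / 8) * ⨅ j : Fin (n + 1),
          (ε j)⁻¹ * ‖(Submodule.orthogonalProjectionOnto (V j)ᗮ u₁ : H) -
            (Submodule.orthogonalProjectionOnto (V j)ᗮ u₂ : H)‖ ^ 2) ⊆
      {u : H | ∀ j, ‖(Submodule.orthogonalProjectionOnto (V j)ᗮ u : H)‖ ≤ ε j} :=
  stmt18_general n V ε hε u₁ u₂ h₁ h₂
end
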